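/- arXiv:2010.10992 — 2 statements merged into one kernel-verified Lean document; each statement's English description precedes it below -/
import Mathlib

section
/- Let X ~ Beta(a,b). If 1 < b < a, then median(X) ≤ (a−1)/(a+b−2); if 1 < a < b, then median(X) ≤ a/(a+b); if a = b > 1, then median(X) = 1/2. -/
/-!
Let `f(x) = x^(a-1) (1-x)^(b-1)` and `F(c) = ∫₀ᶜ f`. Since `F` is strictly increasing on `[0, 1]`,
a median `m` lies below every `c` with `F(c) ≥ F(1)/2`.

The log-ratio `g(t) = log f(c - t) - log f(c + t)` vanishes at `t = 0`. At the mode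
`M = (a-1)/(a+b-2)` for `b ≤ a`, and at `c = 1/2` for `a ≤ b`, it is nondecreasing, so
`f(c + t) ≤ f(c - t)`; reflecting `[c, 1]` into `[2c - 1, c]` then gives `F(c) ≥ F(1)/2`. For
`a = b`, `f` is symmetric about `1/2`.

For `a ≤ b`, `m ≤ 1/2`, and the sign of `g'` on `[0, m)` is that of a nonincreasing function of
`t²`, so `f(m - t) - f(m + t)` changes sign at most once, from `+` to `-`. This single crossing
forces `∫ (x - m) f ≥ 0`, i.e. `m` is at most the mean `a/(a+b)`, which is computed from the
antiderivative `x^a (1-x)^b`.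
-/

open MeasureTheory intervalIntegral Real Set

section Density

variable {f : ℝ → ℝ}

theorem strictMonoOn_integral_of_pos (hf : Continuous f)
    (hpos : ∀ x ∈ Ioo (0 : ℝ) 1, 0 < f x) :
    StrictMonoOn (fun c => ∫ x in (0 : ℝ)..c, f x) (Icc 0 1) := by
  intro x hx y hy hxy
  have hsplit := integral_add_adjacent_intervals (hf.intervalIntegrable (μ := volume) 0 x)
    (hf.intervalIntegrable x y)
  have hxy_pos : 0 < ∫ t in x..y, f t :=
    intervalIntegral_pos_of_pos_on (hf.intervalIntegrable x y)
      (fun t ht => hpos t ⟨hx.1.trans_lt ht.1, ht.2.trans_le hy.2⟩) hxy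
  simp only
  linarith

theorem integral_comp_self_sub (f : ℝ → ℝ) (m : ℝ) :
    ∫ t in (0 : ℝ)..m, f (m - t) = ∫ x in (0 : ℝ)..m, f x := by
  simp [intervalIntegral.integral_comp_sub_left]

theorem integral_comp_self_add (f : ℝ → ℝ) (m : ℝ) :
    ∫ t in (0 : ℝ)..m, f (m + t) = ∫ x in m..2 * m, f x := by
  rw [intervalIntegral.integral_comp_add_left, add_zero, two_mul]

/-- Reflect `[c, 1]` into `[2c - 1, c] ⊆ [0, c]`. -/
theorem half_integral_le_integral_of_reflect_le (hf : Continuous f) {c : ℝ} (hc : 1 / 2 ≤ c)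
    (hc1 : c ≤ 1) (hf0 : ∀ x ∈ Icc (0 : ℝ) 1, 0 ≤ f x)
    (hrefl : ∀ t ∈ Icc 0 (1 - c), f (c + t) ≤ f (c - t)) :
    1 / 2 * ∫ x in (0 : ℝ)..1, f x ≤ ∫ x in (0 : ℝ)..c, f x := by
  have hright : ∫ t in (0 : ℝ)..1 - c, f (c + t) = ∫ x in c..1, f x := by
    rw [intervalIntegral.integral_comp_add_left]; norm_num
  have hleft : ∫ t in (0 : ℝ)..1 - c, f (c - t) = ∫ x in 2 * c - 1..c, f x := by
    rw [intervalIntegral.integral_comp_sub_left]; congr 1 <;> ring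
  have hmono : ∫ t in (0 : ℝ)..1 - c, f (c + t) ≤ ∫ t in (0 : ℝ)..1 - c, f (c - t) :=
    intervalIntegral.integral_mono_on (by linarith)
      ((by fun_prop : Continuous fun t => f (c + t)).intervalIntegrable _ _)
      ((by fun_prop : Continuous fun t => f (c - t)).intervalIntegrable _ _) hrefl
  have hlow : 0 ≤ ∫ x in (0 : ℝ)..2 * c - 1, f x :=
    intervalIntegral.integral_nonneg (by linarith) fun x hx => hf0 x ⟨hx.1, by linarith [hx.2]⟩
  have h1 := integral_add_adjacent_intervals (hf.intervalIntegrable (μ := volume) 0 c)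
    (hf.intervalIntegrable c 1)
  have h2 := integral_add_adjacent_intervals (hf.intervalIntegrable (μ := volume) 0 (2 * c - 1))
    (hf.intervalIntegrable (2 * c - 1) c)
  linarith

theorem integral_zero_half_of_symm (hf : Continuous f) (hsymm : ∀ x, f (1 - x) = f x) :
    ∫ x in (0 : ℝ)..1 / 2, f x = 1 / 2 * ∫ x in (0 : ℝ)..1, f x := by
  have hreflect : ∫ x in (0 : ℝ)..1 / 2, f (1 - x) = ∫ x in (1 / 2 : ℝ)..1, f x := by
    rw [intervalIntegral.integral_comp_sub_left]; norm_num
  simp only [hsymm] at hreflect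
  have hsplit := integral_add_adjacent_intervals (hf.intervalIntegrable (μ := volume) 0 (1 / 2))
    (hf.intervalIntegrable (1 / 2) 1)
  linarith

/-- The conclusion says `ψ ≥ 0` on `[0, c)` and `ψ ≤ 0` on `(c, m]`. -/
theorem exists_sign_change_point {ψ : ℝ → ℝ} {m : ℝ}
    (h : ∀ s t, 0 ≤ s → s ≤ t → t ≤ m → ψ s < 0 → ψ t ≤ 0) :
    ∃ c ≤ m, ∀ t ∈ Icc 0 m, (t - c) * ψ t ≤ 0 := by
  set S := insert m {t | t ∈ Icc 0 m ∧ ψ t < 0}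
  have hbdd : BddBelow S := by
    refine ⟨min m 0, ?_⟩
    rintro t (rfl | ⟨ht, -⟩)
    exacts [min_le_left _ _, (min_le_right _ _).trans ht.1]
  refine ⟨sInf S, csInf_le hbdd (mem_insert m _), fun t ht => ?_⟩
  rcases lt_trichotomy t (sInf S) with hlt | rfl | hgt
  · have : 0 ≤ ψ t := by
      by_contra hneg
      exact (csInf_le hbdd (mem_insert_of_mem m ⟨ht, not_le.mp hneg⟩)).not_gt hlt
    nlinarith
  · simp
  · obtain ⟨s, hs, hst⟩ := exists_lt_of_csInf_lt (insert_nonempty m _) hgt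
    rcases hs with rfl | ⟨hs, hψs⟩
    · exact absurd ht.2 (not_le.mpr hst)
    · nlinarith [h s t hs.1 hst.le ht.2 hψs]

/-- Median `≤` mean. Integrating `(t - c) (f(m - t) - f(m + t)) ≤ 0` over `[0, m]` and
`c ≤ x - m` over `[2m, 1]` gives `∫ (x - m) f ≥ c (∫₀¹ f - 2 ∫₀ᵐ f) = 0`. -/
theorem median_mul_integral_le_integral_mul (hf : Continuous f) {m c : ℝ} (hm0 : 0 ≤ m)
    (hm : 2 * m ≤ 1) (hf0 : ∀ x ∈ Icc (2 * m) 1, 0 ≤ f x)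
    (hmed : ∫ x in (0 : ℝ)..m, f x = 1 / 2 * ∫ x in (0 : ℝ)..1, f x) (hcm : c ≤ m)
    (hcross : ∀ t ∈ Icc 0 m, (t - c) * (f (m - t) - f (m + t)) ≤ 0) :
    m * ∫ x in (0 : ℝ)..1, f x ≤ ∫ x in (0 : ℝ)..1, x * f x := by
  set g : ℝ → ℝ := fun x => (x - m) * f x
  have hg : Continuous g := by fun_prop
  have hinner : ∫ t in (0 : ℝ)..m, c * (f (m + t) - f (m - t))
      ≤ ∫ t in (0 : ℝ)..m, (g (m - t) + g (m + t)) := by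
    refine intervalIntegral.integral_mono_on hm0
      (Continuous.intervalIntegrable (by fun_prop) _ _)
      (Continuous.intervalIntegrable (by fun_prop) _ _) fun t ht => ?_
    simp only [g]
    nlinarith [hcross t ht]
  rw [intervalIntegral.integral_const_mul,
    intervalIntegral.integral_sub (Continuous.intervalIntegrable (by fun_prop) _ _)
      (Continuous.intervalIntegrable (by fun_prop) _ _),
    intervalIntegral.integral_add (Continuous.intervalIntegrable (by fun_prop) _ _)
      (Continuous.intervalIntegrable (by fun_prop) _ _),
    integral_comp_self_sub f, integral_comp_self_add f, integral_comp_self_sub g,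
    integral_comp_self_add g] at hinner
  have houter : c * ∫ x in 2 * m..1, f x ≤ ∫ x in 2 * m..1, g x := by
    rw [← intervalIntegral.integral_const_mul]
    refine intervalIntegral.integral_mono_on hm ((hf.const_mul c).intervalIntegrable _ _)
      (hg.intervalIntegrable _ _) fun x hx => ?_
    exact mul_le_mul_of_nonneg_right (by linarith [hx.1]) (hf0 x hx)
  have hI : ∀ u v, IntervalIntegrable f volume u v := fun u v => hf.intervalIntegrable u v
  have hgI : ∀ u v, IntervalIntegrable g volume u v := fun u v => hg.intervalIntegrable u v
  have hmean : ∫ x in (0 : ℝ)..1, g x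
      = (∫ x in (0 : ℝ)..1, x * f x) - m * ∫ x in (0 : ℝ)..1, f x := by
    rw [← intervalIntegral.integral_const_mul, ← intervalIntegral.integral_sub
      (Continuous.intervalIntegrable (by fun_prop) _ _)
      (Continuous.intervalIntegrable (by fun_prop) _ _)]
    simp only [g, sub_mul]
  have hbalance :
      (∫ x in m..2 * m, f x) - (∫ x in (0 : ℝ)..m, f x) + ∫ x in 2 * m..1, f x = 0 := by
    linarith [integral_add_adjacent_intervals (hI 0 m) (hI m (2 * m)),
      integral_add_adjacent_intervals (hI 0 (2 * m)) (hI (2 * m) 1)]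
  have hzero : c * ((∫ x in m..2 * m, f x) - ∫ x in (0 : ℝ)..m, f x) + c * ∫ x in 2 * m..1, f x
      = 0 := by
    rw [← mul_add, hbalance, mul_zero]
  linarith [integral_add_adjacent_intervals (hgI 0 m) (hgI m (2 * m)),
    integral_add_adjacent_intervals (hgI 0 (2 * m)) (hgI (2 * m) 1)]

theorem neg_of_neg_of_hasDerivAt {g g' : ℝ → ℝ} {m : ℝ}
    (hg : ∀ t ∈ Ico 0 m, HasDerivAt g (g' t) t) (hg0 : g 0 = 0)
    (hg' : ∀ ξ₁ ξ₂, 0 ≤ ξ₁ → ξ₁ ≤ ξ₂ → ξ₂ < m → g' ξ₁ < 0 → g' ξ₂ < 0)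
    {s t : ℝ} (hs : 0 ≤ s) (hst : s ≤ t) (htm : t < m) (hgs : g s < 0) : g t < 0 := by
  have hcont : ∀ u v, 0 ≤ u → v < m → ContinuousOn g (Icc u v) := fun u v hu hv x hx =>
    (hg x ⟨hu.trans hx.1, hx.2.trans_lt hv⟩).continuousAt.continuousWithinAt
  have hs0 : 0 < s := hs.lt_of_ne (by rintro rfl; linarith)
  obtain ⟨ξ₁, hξ₁, hslope₁⟩ := exists_hasDerivAt_eq_slope g g' hs0
    (hcont 0 s le_rfl (by linarith)) fun x hx => hg x ⟨hx.1.le, by linarith [hx.2]⟩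
  have hneg₁ : g' ξ₁ < 0 := by
    rw [hslope₁, hg0]
    exact div_neg_of_neg_of_pos (by linarith) (by linarith)
  rcases hst.eq_or_lt with rfl | hst
  · exact hgs
  obtain ⟨ξ₂, hξ₂, hslope₂⟩ := exists_hasDerivAt_eq_slope g g' hst (hcont s t hs htm)
    fun x hx => hg x ⟨by linarith [hx.1], by linarith [hx.2]⟩
  have hneg₂ := hg' ξ₁ ξ₂ hξ₁.1.le (hξ₁.2.trans hξ₂.1).le (hξ₂.2.trans htm) hneg₁
  rw [hslope₂] at hneg₂
  by_contra hgt
  exact hneg₂.not_ge (div_nonneg (by linarith) (by linarith))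

end Density

noncomputable def unnormBetaPDF (a b x : ℝ) : ℝ := x ^ (a - 1) * (1 - x) ^ (b - 1)

/-- `log f(c - t) - log f(c + t)` for `f = unnormBetaPDF a b`. -/
noncomputable def betaLogRatio (a b c t : ℝ) : ℝ :=
  (a - 1) * (log (c - t) - log (c + t)) + (b - 1) * (log (1 - c + t) - log (1 - c - t))

noncomputable def betaLogRatioDeriv (a b c t : ℝ) : ℝ :=
  2 * ((b - 1) * (1 - c) / ((1 - c) ^ 2 - t ^ 2) - (a - 1) * c / (c ^ 2 - t ^ 2))

namespace unnormBetaPDF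

variable {a b : ℝ}

theorem continuous (ha : 1 ≤ a) (hb : 1 ≤ b) : Continuous (unnormBetaPDF a b) :=
  (continuous_rpow_const (by linarith)).mul
    ((continuous_rpow_const (by linarith)).comp (continuous_sub_left 1))

theorem nonneg {x : ℝ} (hx : x ∈ Icc (0 : ℝ) 1) : 0 ≤ unnormBetaPDF a b x :=
  mul_nonneg (rpow_nonneg hx.1 _) (rpow_nonneg (sub_nonneg.mpr hx.2) _)

theorem pos {x : ℝ} (hx : x ∈ Ioo (0 : ℝ) 1) : 0 < unnormBetaPDF a b x :=
  mul_pos (rpow_pos_of_pos hx.1 _) (rpow_pos_of_pos (sub_pos.mpr hx.2) _)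

theorem zero_left (ha : 1 < a) : unnormBetaPDF a b 0 = 0 := by
  simp [unnormBetaPDF, zero_rpow (by linarith : a - 1 ≠ 0)]

theorem one_right (hb : 1 < b) : unnormBetaPDF a b 1 = 0 := by
  simp [unnormBetaPDF, zero_rpow (by linarith : b - 1 ≠ 0)]

theorem one_sub (a b x : ℝ) : unnormBetaPDF a b (1 - x) = unnormBetaPDF b a x := by
  rw [unnormBetaPDF, unnormBetaPDF, sub_sub_cancel, mul_comm]

theorem integral_pos (ha : 1 ≤ a) (hb : 1 ≤ b) : 0 < ∫ x in (0 : ℝ)..1, unnormBetaPDF a b x :=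
  intervalIntegral_pos_of_pos_on ((continuous ha hb).intervalIntegrable _ _) (fun _ => pos)
    one_pos

theorem hasDerivAt_rpow_mul_rpow (ha : 1 ≤ a) (hb : 1 ≤ b) {x : ℝ} (hx : x ∈ Icc (0 : ℝ) 1) :
    HasDerivAt (fun x => x ^ a * (1 - x) ^ b)
      (a * unnormBetaPDF a b x - (a + b) * (x * unnormBetaPDF a b x)) x := by
  have hxa := (hasDerivAt_rpow_const (x := x) (Or.inr ha))
  have hxb := ((hasDerivAt_id' x).const_sub 1).rpow_const (p := b) (Or.inr hb)
  refine (hxa.mul hxb).congr_deriv ?_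
  have ea : x ^ a = x ^ (a - 1) * x := by
    rw [← rpow_add_one' hx.1 (by linarith), sub_add_cancel]
  have eb : (1 - x) ^ b = (1 - x) ^ (b - 1) * (1 - x) := by
    rw [← rpow_add_one' (sub_nonneg.mpr hx.2) (by linarith), sub_add_cancel]
  simp only [unnormBetaPDF, ea, eb]
  ring

/-- `x ^ a (1 - x) ^ b` is an antiderivative of `(a - (a + b) x) f(x)` vanishing at `0` and `1`. -/
theorem integral_mul_id (ha : 1 ≤ a) (hb : 1 ≤ b) :
    ∫ x in (0 : ℝ)..1, x * unnormBetaPDF a b x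
      = a / (a + b) * ∫ x in (0 : ℝ)..1, unnormBetaPDF a b x := by
  have hcont := continuous ha hb
  have hFTC := integral_eq_sub_of_hasDerivAt
    (fun x hx => hasDerivAt_rpow_mul_rpow ha hb (uIcc_of_le (zero_le_one' ℝ) ▸ hx))
    (Continuous.intervalIntegrable (by fun_prop) 0 1)
  rw [intervalIntegral.integral_sub (Continuous.intervalIntegrable (by fun_prop) _ _)
    (Continuous.intervalIntegrable (by fun_prop) _ _), intervalIntegral.integral_const_mul,
    intervalIntegral.integral_const_mul] at hFTC
  simp only [sub_self, zero_rpow (by linarith : b ≠ 0), zero_rpow (by linarith : a ≠ 0),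
    mul_zero, zero_mul, sub_zero] at hFTC
  field_simp
  linarith


theorem sub_eq_exp_mul_add {c t : ℝ} (ht0 : 0 ≤ t) (htc : t < c) (htc' : t < 1 - c) :
    unnormBetaPDF a b (c - t) = exp (betaLogRatio a b c t) * unnormBetaPDF a b (c + t) := by
  rw [unnormBetaPDF, unnormBetaPDF, show 1 - (c - t) = 1 - c + t by ring,
    show 1 - (c + t) = 1 - c - t by ring, rpow_def_of_pos (by linarith),
    rpow_def_of_pos (by linarith), rpow_def_of_pos (by linarith), rpow_def_of_pos (by linarith),
    ← exp_add, ← exp_add, ← exp_add, betaLogRatio]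
  ring_nf

theorem sub_lt_add_iff {c t : ℝ} (ht0 : 0 ≤ t) (htc : t < c) (htc' : t < 1 - c) :
    unnormBetaPDF a b (c - t) < unnormBetaPDF a b (c + t) ↔ betaLogRatio a b c t < 0 := by
  rw [sub_eq_exp_mul_add ht0 htc htc', mul_lt_iff_lt_one_left (pos ⟨by linarith, by linarith⟩),
    exp_lt_one_iff]

end unnormBetaPDF

section LogRatio

variable {a b c : ℝ}

theorem betaLogRatio_zero : betaLogRatio a b c 0 = 0 := by
  simp [betaLogRatio]

theorem hasDerivAt_betaLogRatio {t : ℝ} (ht0 : 0 ≤ t) (htc : t < c) (htc' : t < 1 - c) :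
    HasDerivAt (betaLogRatio a b c) (betaLogRatioDeriv a b c t) t := by
  have h1 := ((hasDerivAt_id' t).const_sub c).log (by linarith)
  have h2 := ((hasDerivAt_id' t).const_add c).log (by linarith)
  have h3 := ((hasDerivAt_id' t).const_add (1 - c)).log (by linarith)
  have h4 := ((hasDerivAt_id' t).const_sub (1 - c)).log (by linarith)
  refine (((h1.sub h2).const_mul (a - 1)).add ((h3.sub h4).const_mul (b - 1))).congr_deriv ?_
  have : c ^ 2 - t ^ 2 ≠ 0 := by nlinarith
  have : (1 - c) ^ 2 - t ^ 2 ≠ 0 := by nlinarith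
  have : c - t ≠ 0 := by linarith
  have : c + t ≠ 0 := by linarith
  have : 1 - c + t ≠ 0 := by linarith
  have : 1 - c - t ≠ 0 := by linarith
  rw [betaLogRatioDeriv]
  field_simp
  ring

theorem betaLogRatioDeriv_mode_nonneg (hb : 1 < b) (hba : b ≤ a) {t : ℝ} (ht0 : 0 ≤ t)
    (ht : t < 1 - (a - 1) / (a + b - 2)) :
    0 ≤ betaLogRatioDeriv a b ((a - 1) / (a + b - 2)) t := by
  set M := (a - 1) / (a + b - 2)
  have hS : 0 < a + b - 2 := by linarith
  have hMa : a - 1 = M * (a + b - 2) := by simp only [M]; field_simp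
  have hMb : b - 1 = (1 - M) * (a + b - 2) := by simp only [M]; field_simp; ring
  have hM : 1 / 2 ≤ M := by rw [le_div_iff₀ hS]; linarith
  have hden₁ : 0 < M ^ 2 - t ^ 2 := by nlinarith
  have hden₂ : 0 < (1 - M) ^ 2 - t ^ 2 := by nlinarith
  rw [betaLogRatioDeriv, hMa, hMb]
  refine mul_nonneg zero_le_two (sub_nonneg.mpr ?_)
  rw [div_le_div_iff₀ hden₁ hden₂]
  nlinarith [mul_nonneg (mul_nonneg hS.le (sq_nonneg t)) (by linarith : (0 : ℝ) ≤ 2 * M - 1)]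

theorem betaLogRatioDeriv_half_nonneg (hab : a ≤ b) {t : ℝ} (ht0 : 0 ≤ t) (ht : t < 1 / 2) :
    0 ≤ betaLogRatioDeriv a b (1 / 2) t := by
  have hden : 0 < (1 / 2 : ℝ) ^ 2 - t ^ 2 := by nlinarith
  rw [betaLogRatioDeriv, show (1 : ℝ) - 1 / 2 = 1 / 2 by norm_num, ← sub_div]
  exact mul_nonneg zero_le_two (div_nonneg (by nlinarith) hden.le)

/-- For `a ≤ b` and `c ≤ 1 / 2` the sign of the derivative is that of a nonincreasing function
of `t ^ 2`. -/
theorem betaLogRatioDeriv_neg_of_le (ha : 1 ≤ a) (hab : a ≤ b) (hc : c ≤ 1 / 2) {s t : ℝ}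
    (hs : 0 ≤ s) (hst : s ≤ t) (htc : t < c) (hneg : betaLogRatioDeriv a b c s < 0) :
    betaLogRatioDeriv a b c t < 0 := by
  have hs₁ : 0 < c ^ 2 - s ^ 2 := by nlinarith
  have hs₂ : 0 < (1 - c) ^ 2 - s ^ 2 := by nlinarith
  have ht₁ : 0 < c ^ 2 - t ^ 2 := by nlinarith
  have ht₂ : 0 < (1 - c) ^ 2 - t ^ 2 := by nlinarith
  have hcoef : (a - 1) * c ≤ (b - 1) * (1 - c) := by nlinarith
  rw [betaLogRatioDeriv] at hneg ⊢
  have hs_lt : (b - 1) * (1 - c) / ((1 - c) ^ 2 - s ^ 2) < (a - 1) * c / (c ^ 2 - s ^ 2) := by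
    linarith
  suffices (b - 1) * (1 - c) / ((1 - c) ^ 2 - t ^ 2) < (a - 1) * c / (c ^ 2 - t ^ 2) by linarith
  rw [div_lt_div_iff₀ hs₂ hs₁] at hs_lt
  rw [div_lt_div_iff₀ ht₂ ht₁]
  nlinarith [mul_le_mul_of_nonneg_left (by nlinarith : s ^ 2 ≤ t ^ 2) (sub_nonneg.mpr hcoef)]

end LogRatio

namespace unnormBetaPDF

variable {a b : ℝ}

theorem add_le_sub_of_betaLogRatioDeriv_nonneg (hb : 1 < b) {c : ℝ} (hc : 1 / 2 ≤ c)
    (hc1 : c ≤ 1) (hD : ∀ t ∈ Ioo 0 (1 - c), 0 ≤ betaLogRatioDeriv a b c t) :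
    ∀ t ∈ Icc 0 (1 - c), unnormBetaPDF a b (c + t) ≤ unnormBetaPDF a b (c - t) := by
  intro t ht
  rcases ht.2.eq_or_lt with rfl | hlt
  · rw [add_sub_cancel, one_right hb]
    exact nonneg ⟨by linarith, by linarith⟩
  have hderiv : ∀ s ∈ Ico 0 (1 - c),
      HasDerivAt (betaLogRatio a b c) (betaLogRatioDeriv a b c s) s := fun s hs =>
    hasDerivAt_betaLogRatio hs.1 (by linarith [hs.2]) hs.2
  have hmono : MonotoneOn (betaLogRatio a b c) (Ico 0 (1 - c)) :=
    monotoneOn_of_hasDerivWithinAt_nonneg (convex_Ico _ _)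
      (fun s hs => (hderiv s hs).continuousAt.continuousWithinAt)
      (by
        rw [interior_Ico]
        exact fun s hs => (hderiv s (Ioo_subset_Ico_self hs)).hasDerivWithinAt)
      (by rw [interior_Ico]; exact hD)
  have hlog : 0 ≤ betaLogRatio a b c t :=
    betaLogRatio_zero (a := a) (b := b) (c := c) ▸
      hmono ⟨le_rfl, by linarith [ht.1]⟩ ⟨ht.1, hlt⟩ ht.1
  exact not_lt.mp fun h => hlog.not_gt ((sub_lt_add_iff ht.1 (by linarith) hlt).mp h)

theorem sub_sub_add_nonpos_of_neg (ha : 1 < a) (hab : a ≤ b) {m : ℝ} (hm : m ≤ 1 / 2) :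
    ∀ s t, 0 ≤ s → s ≤ t → t ≤ m →
      unnormBetaPDF a b (m - s) - unnormBetaPDF a b (m + s) < 0 →
      unnormBetaPDF a b (m - t) - unnormBetaPDF a b (m + t) ≤ 0 := by
  intro s t hs hst htm hψs
  rcases htm.eq_or_lt with rfl | htm
  · rw [sub_self, zero_left ha, zero_sub, neg_nonpos]
    exact nonneg ⟨by linarith, by linarith⟩
  have hlog : betaLogRatio a b m t < 0 :=
    neg_of_neg_of_hasDerivAt
      (fun u hu => hasDerivAt_betaLogRatio hu.1 hu.2 (by linarith [hu.2])) betaLogRatio_zero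
      (fun ξ₁ ξ₂ h₁ h₁₂ h₂ => betaLogRatioDeriv_neg_of_le ha.le hab hm h₁ h₁₂ h₂) hs hst htm
      ((sub_lt_add_iff hs (by linarith) (by linarith)).mp (sub_neg.mp hψs))
  exact (sub_neg.mpr ((sub_lt_add_iff (hs.trans hst) htm (by linarith)).mpr hlog)).le

theorem median_le_mode (hb : 1 < b) (hba : b ≤ a) {m : ℝ} (hm : m ∈ Icc (0 : ℝ) 1)
    (hmed : ∫ x in (0 : ℝ)..m, unnormBetaPDF a b x
      = 1 / 2 * ∫ x in (0 : ℝ)..1, unnormBetaPDF a b x) :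
    m ≤ (a - 1) / (a + b - 2) := by
  have hS : 0 < a + b - 2 := by linarith
  have hM : 1 / 2 ≤ (a - 1) / (a + b - 2) := by rw [le_div_iff₀ hS]; linarith
  have hM1 : (a - 1) / (a + b - 2) ≤ 1 := by rw [div_le_one hS]; linarith
  have hcont := continuous (hb.le.trans hba) hb.le
  refine ((strictMonoOn_integral_of_pos hcont fun _ => pos).le_iff_le hm
    ⟨by linarith, hM1⟩).mp ?_
  simp only [hmed]
  exact half_integral_le_integral_of_reflect_le hcont hM hM1 (fun _ => nonneg)
    (add_le_sub_of_betaLogRatioDeriv_nonneg hb hM hM1 fun t ht =>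
      betaLogRatioDeriv_mode_nonneg hb hba ht.1.le ht.2)

theorem median_le_mean (ha : 1 < a) (hab : a ≤ b) {m : ℝ} (hm : m ∈ Icc (0 : ℝ) 1)
    (hmed : ∫ x in (0 : ℝ)..m, unnormBetaPDF a b x
      = 1 / 2 * ∫ x in (0 : ℝ)..1, unnormBetaPDF a b x) :
    m ≤ a / (a + b) := by
  have hb : 1 < b := ha.trans_le hab
  have hcont := continuous ha.le hb.le
  have hm2 : m ≤ 1 / 2 := by
    refine ((strictMonoOn_integral_of_pos hcont fun _ => pos).le_iff_le hm
      ⟨by norm_num, by norm_num⟩).mp ?_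
    simp only [hmed]
    exact half_integral_le_integral_of_reflect_le hcont le_rfl (by norm_num) (fun _ => nonneg)
      (add_le_sub_of_betaLogRatioDeriv_nonneg hb le_rfl (by norm_num) fun t ht =>
        betaLogRatioDeriv_half_nonneg hab ht.1.le (by linarith [ht.2]))
  obtain ⟨c, hcm, hcross⟩ := exists_sign_change_point (sub_sub_add_nonpos_of_neg ha hab hm2)
  have hmean := median_mul_integral_le_integral_mul hcont hm.1 (by linarith)
    (fun x hx => nonneg ⟨by linarith [hx.1, hm.1], hx.2⟩) hmed hcm hcross
  rw [integral_mul_id ha.le hb.le] at hmean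
  exact le_of_mul_le_mul_right hmean (integral_pos ha.le hb.le)

theorem median_eq_half (ha : 1 ≤ a) {m : ℝ} (hm : m ∈ Icc (0 : ℝ) 1)
    (hmed : ∫ x in (0 : ℝ)..m, unnormBetaPDF a a x
      = 1 / 2 * ∫ x in (0 : ℝ)..1, unnormBetaPDF a a x) :
    m = 1 / 2 := by
  have hcont := continuous ha ha
  refine (strictMonoOn_integral_of_pos hcont fun _ => pos).injOn hm
    ⟨by norm_num, by norm_num⟩ ?_
  simp only [hmed, integral_zero_half_of_symm hcont (one_sub a a)]

end unnormBetaPDF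

/-- Median bounds for a Beta(a,b) random variable, where a median is any m ∈ [0,1]
with P[X ≤ m] = 1/2, expressed via the unnormalized beta density. -/
theorem stmt_4 (a b m : ℝ) (hm0 : 0 ≤ m) (hm1 : m ≤ 1)
    (hmed : ∫ x in (0:ℝ)..m, x ^ (a - 1) * (1 - x) ^ (b - 1)
      = (1 / 2) * ∫ x in (0:ℝ)..1, x ^ (a - 1) * (1 - x) ^ (b - 1)) :
    ((1 < b ∧ b < a) → m ≤ (a - 1) / (a + b - 2)) ∧
    ((1 < a ∧ a < b) → m ≤ a / (a + b)) ∧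
    ((a = b ∧ 1 < a) → m = 1 / 2) := by
  refine ⟨fun ⟨hb, hba⟩ => unnormBetaPDF.median_le_mode hb hba.le ⟨hm0, hm1⟩ hmed,
    fun ⟨ha, hab⟩ => unnormBetaPDF.median_le_mean ha hab.le ⟨hm0, hm1⟩ hmed, ?_⟩
  rintro ⟨rfl, ha⟩
  exact unnormBetaPDF.median_eq_half ha.le ⟨hm0, hm1⟩ hmed
end

section
/- Fix a, b > 1 and k', with k' ≥ 1 an integer. Then there exists w ≥ (b−1)/(k'·(a+b)) such that 1 − w·k'/(1+w) ≥ median(Beta(a,b)). -/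
/-!
Put t = (a + 1) / (a + b) and w = (b - 1) / (k' (a + b)); then w k' / (1 + w) ≤ w k' ≤ 1 - t,
so it suffices to show that the median is at most t.

For 0 < t < 1 with a (1 - t) ≤ (b - 1) t, the substitution x ↦ t² / x maps [t, 1] onto [t², t],
and on [t, 1] the Beta integrand g is dominated by its transform (t² / x²) g(t² / x): in logarithms
this is a function vanishing at x = t with nonnegative derivative. Hence the Beta mass of [t, 1]
is at most that of [t², t] ⊆ [0, t], which forces the median below t.
-/

open Real Set intervalIntegral MeasureTheory

noncomputable def betaIntegrand (a b x : ℝ) : ℝ := x ^ (a - 1) * (1 - x) ^ (b - 1)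

section BetaIntegrand

variable {a b : ℝ}

theorem continuous_betaIntegrand (ha : 1 ≤ a) (hb : 1 ≤ b) : Continuous (betaIntegrand a b) :=
  ((continuous_id.rpow_const fun _ => Or.inr (by linarith)).mul
    ((continuous_const.sub continuous_id).rpow_const fun _ => Or.inr (by linarith)))

theorem betaIntegrand_nonneg {x : ℝ} (hx0 : 0 ≤ x) (hx1 : x ≤ 1) : 0 ≤ betaIntegrand a b x :=
  mul_nonneg (rpow_nonneg hx0 _) (rpow_nonneg (sub_nonneg.2 hx1) _)

theorem betaIntegrand_pos {x : ℝ} (hx0 : 0 < x) (hx1 : x < 1) : 0 < betaIntegrand a b x :=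
  mul_pos (rpow_pos_of_pos hx0 _) (rpow_pos_of_pos (sub_pos.2 hx1) _)

theorem log_betaIntegrand {x : ℝ} (hx0 : 0 < x) (hx1 : x < 1) :
    log (betaIntegrand a b x) = (a - 1) * log x + (b - 1) * log (1 - x) := by
  rw [betaIntegrand, log_mul (rpow_pos_of_pos hx0 _).ne' (rpow_pos_of_pos (sub_pos.2 hx1) _).ne',
    log_rpow hx0, log_rpow (sub_pos.2 hx1)]

end BetaIntegrand

theorem integral_div_sq_mul_comp_div {f : ℝ → ℝ} (hf : Continuous f) {c u v : ℝ}
    (hu : 0 < u) (hv : 0 < v) :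
    ∫ x in u..v, c / x ^ 2 * f (c / x) = ∫ y in c / v..c / u, f y := by
  have hpos : ∀ x ∈ uIcc u v, 0 < x := fun _ hx => (lt_min hu hv).trans_le hx.1
  have hderiv : ∀ x ∈ uIcc u v, HasDerivAt (fun y => c / y) (-(c / x ^ 2)) x := by
    intro x hx
    simpa [div_eq_mul_inv] using (hasDerivAt_inv (hpos x hx).ne').const_mul c
  have hcont : ContinuousOn (fun x => -(c / x ^ 2)) (uIcc u v) :=
    (continuousOn_const.div (continuousOn_id.pow 2) fun x hx =>
      pow_ne_zero 2 (hpos x hx).ne').neg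
  rw [integral_symm (b := c / v), ← integral_comp_mul_deriv hderiv hcont hf,
    ← intervalIntegral.integral_neg]
  simp only [Function.comp, mul_neg, neg_neg, mul_comm]

theorem two_mul_log_sub_log_le {a b t x : ℝ} (hb : 1 ≤ b) (ht0 : 0 < t) (ht1 : t < 1)
    (hat : a * (1 - t) ≤ (b - 1) * t) (htx : t ≤ x) (hx1 : x < 1) :
    2 * a * (log x - log t) ≤ (b - 1) * (log (x - t ^ 2) - log x - log (1 - x)) := by
  set φ : ℝ → ℝ := fun y =>
    (b - 1) * (log (y - t ^ 2) - log y - log (1 - y)) - 2 * a * (log y - log t)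
  set φ' : ℝ → ℝ := fun y =>
    (b - 1) * (1 / (y - t ^ 2) - 1 / y + 1 / (1 - y)) - 2 * a * (1 / y)
  have hφ' : ∀ y ∈ Ico t 1, HasDerivAt φ (φ' y) y := by
    rintro y ⟨hty, hy1⟩
    have hy0 : 0 < y := ht0.trans_le hty
    have hyt : 0 < y - t ^ 2 := by nlinarith
    have h1y : 0 < 1 - y := by linarith
    have d1 := ((hasDerivAt_id y).sub_const (t ^ 2)).log hyt.ne'
    have d2 := hasDerivAt_log hy0.ne'
    have d3 := ((hasDerivAt_id y).const_sub 1).log h1y.ne'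
    refine ((((d1.sub d2).sub d3).const_mul (b - 1)).sub
      ((d2.sub_const (log t)).const_mul (2 * a))).congr_deriv ?_
    simp only [φ', id]
    ring
  have hmono : MonotoneOn φ (Ico t 1) := by
    refine monotoneOn_of_hasDerivWithinAt_nonneg (convex_Ico t 1)
      (fun y hy => (hφ' y hy).continuousAt.continuousWithinAt)
      (fun y hy => (hφ' y (interior_subset hy)).hasDerivWithinAt) ?_
    rw [interior_Ico]
    rintro y ⟨hty, hy1⟩
    have hy0 : 0 < y := ht0.trans hty
    have hyt : 0 < y - t ^ 2 := by nlinarith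
    have h1y : 0 < 1 - y := by linarith
    -- after multiplying by 1 - t this follows from `hat` and (1 + t) (y - t) ^ 2 ≥ 0
    have key :
        2 * a * ((y - t ^ 2) * (1 - y)) ≤ (b - 1) * (t ^ 2 * (1 - y) + y * (y - t ^ 2)) := by
      have hprod : 0 ≤ (y - t ^ 2) * (1 - y) := by positivity
      refine le_of_mul_le_mul_left ?_ (sub_pos.2 ht1)
      nlinarith [mul_le_mul_of_nonneg_right hat hprod,
        mul_nonneg (mul_nonneg (sub_nonneg.2 hb) (by linarith : (0 : ℝ) ≤ 1 + t))
          (sq_nonneg (y - t))]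
    have hφ'_eq : φ' y = ((b - 1) * (t ^ 2 * (1 - y) + y * (y - t ^ 2))
        - 2 * a * ((y - t ^ 2) * (1 - y))) / (y * (y - t ^ 2) * (1 - y)) := by
      simp only [φ']
      field_simp
      ring
    rw [hφ'_eq]
    exact div_nonneg (sub_nonneg.2 key) (by positivity)
  have hφt : φ t = 0 := by
    have : t - t ^ 2 = t * (1 - t) := by ring
    simp only [φ, this, log_mul ht0.ne' (sub_pos.2 ht1).ne']
    ring
  have := hmono (left_mem_Ico.2 ht1) ⟨htx, hx1⟩ htx
  simp only [hφt, φ] at this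
  linarith

theorem betaIntegrand_le_inversion {a b t x : ℝ} (hb : 1 < b) (ht0 : 0 < t) (ht1 : t < 1)
    (hat : a * (1 - t) ≤ (b - 1) * t) (htx : t ≤ x) (hx1 : x ≤ 1) :
    betaIntegrand a b x ≤ t ^ 2 / x ^ 2 * betaIntegrand a b (t ^ 2 / x) := by
  have hx0 : 0 < x := ht0.trans_le htx
  have hy0 : 0 < t ^ 2 / x := by positivity
  have hy1 : t ^ 2 / x < 1 := (div_lt_one hx0).2 (by nlinarith)
  have hrhs : 0 < t ^ 2 / x ^ 2 * betaIntegrand a b (t ^ 2 / x) :=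
    mul_pos (by positivity) (betaIntegrand_pos hy0 hy1)
  rcases hx1.eq_or_lt with rfl | hx1
  · rw [betaIntegrand, sub_self, zero_rpow (by linarith), mul_zero]
    exact hrhs.le
  have hxt : 0 < x - t ^ 2 := by nlinarith
  have h1y : 1 - t ^ 2 / x = (x - t ^ 2) / x := by field_simp
  rw [← log_le_log_iff (betaIntegrand_pos hx0 hx1) hrhs,
    log_mul (by positivity) (betaIntegrand_pos hy0 hy1).ne', log_betaIntegrand hx0 hx1,
    log_betaIntegrand hy0 hy1, h1y,
    log_div (by positivity) (by positivity), log_div (by positivity) hx0.ne',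
    log_div hxt.ne' hx0.ne', log_pow, log_pow]
  have := two_mul_log_sub_log_le hb.le ht0 ht1 hat htx hx1
  push_cast
  linarith

theorem integral_betaIntegrand_tail_le {a b t : ℝ} (ha : 1 ≤ a) (hb : 1 < b) (ht0 : 0 < t)
    (ht1 : t < 1) (hat : a * (1 - t) ≤ (b - 1) * t) :
    ∫ x in t..1, betaIntegrand a b x ≤ ∫ x in 0..t, betaIntegrand a b x := by
  have hg := continuous_betaIntegrand ha hb.le
  calc ∫ x in t..1, betaIntegrand a b x
      ≤ ∫ x in t..1, t ^ 2 / x ^ 2 * betaIntegrand a b (t ^ 2 / x) := by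
        refine integral_mono_on ht1.le (hg.intervalIntegrable t 1) ?_
          fun x hx => betaIntegrand_le_inversion hb ht0 ht1 hat hx.1 hx.2
        exact ContinuousOn.intervalIntegrable_of_Icc ht1.le
          ((continuousOn_const.div (continuousOn_id.pow 2) fun x hx =>
            pow_ne_zero 2 (ht0.trans_le hx.1).ne').mul
          (hg.comp_continuousOn (continuousOn_const.div continuousOn_id fun x hx =>
            (ht0.trans_le hx.1).ne')))
    _ = ∫ x in t ^ 2..t, betaIntegrand a b x := by
        rw [integral_div_sq_mul_comp_div hg ht0 one_pos, div_one, sq, mul_self_div_self]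
    _ ≤ ∫ x in 0..t, betaIntegrand a b x :=
        integral_mono_interval (sq_nonneg t) (by nlinarith) le_rfl
          (ae_restrict_of_forall_mem measurableSet_Ioc fun x hx =>
            betaIntegrand_nonneg hx.1.le (hx.2.trans ht1.le))
          (hg.intervalIntegrable 0 t)

theorem le_of_integral_eq_half_of_integral_le {f : ℝ → ℝ} {m t : ℝ}
    (hf : ∀ u v, IntervalIntegrable f volume u v) (hpos : ∀ x ∈ Ioo t m, 0 < f x)
    (hmed : ∫ x in 0..m, f x = 1 / 2 * ∫ x in 0..1, f x)
    (htail : ∫ x in t..1, f x ≤ ∫ x in 0..t, f x) : m ≤ t := by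
  by_contra! htm
  have h0m := integral_add_adjacent_intervals (hf 0 t) (hf t m)
  have htm1 := integral_add_adjacent_intervals (hf t m) (hf m 1)
  have h01 := integral_add_adjacent_intervals (hf 0 m) (hf m 1)
  have hmid : 0 < ∫ x in t..m, f x := intervalIntegral_pos_of_pos_on (hf t m) hpos htm
  linarith

theorem beta_median_le {a b t m : ℝ} (ha : 1 ≤ a) (hb : 1 < b) (ht0 : 0 < t) (ht1 : t < 1)
    (hat : a * (1 - t) ≤ (b - 1) * t) (hm1 : m ≤ 1)
    (hmed : ∫ x in 0..m, betaIntegrand a b x = 1 / 2 * ∫ x in 0..1, betaIntegrand a b x) :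
    m ≤ t :=
  le_of_integral_eq_half_of_integral_le (continuous_betaIntegrand ha hb.le).intervalIntegrable
    (fun _ hx => betaIntegrand_pos (ht0.trans hx.1) (hx.2.trans_le hm1)) hmed
    (integral_betaIntegrand_tail_le ha hb ht0 ht1 hat)

theorem stmt_5_general (a b : ℝ) (ha : 1 < a) (hb : 1 < b) (k' : ℕ)
    (m : ℝ) (hm1 : m ≤ 1)
    (hmed : ∫ x in (0:ℝ)..m, x ^ (a - 1) * (1 - x) ^ (b - 1)
      = (1 / 2) * ∫ x in (0:ℝ)..1, x ^ (a - 1) * (1 - x) ^ (b - 1)) :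
    ∃ w : ℝ, (b - 1) / ((k' : ℝ) * (a + b)) ≤ w ∧
      m ≤ 1 - w * (k' : ℝ) / (1 + w) := by
  set s := (b - 1) / (a + b) with hs
  have hab : 0 < a + b := by linarith
  have hs0 : 0 < s := div_pos (by linarith) hab
  have hs1 : s < 1 := (div_lt_one hab).2 (by linarith)
  have hm : m ≤ 1 - s := by
    refine beta_median_le ha.le hb (by linarith) (by linarith) ?_ hm1 hmed
    have : (b - 1) * (1 - s) - a * s = s := by rw [hs]; field_simp; ring
    linarith
  refine ⟨(b - 1) / (k' * (a + b)), le_rfl, ?_⟩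
  rw [mul_comm (k' : ℝ), ← div_div, ← hs]
  have hw0 : 0 ≤ s / k' := by positivity
  calc m ≤ 1 - s := hm
    _ ≤ 1 - s / k' * k' := by
        rw [div_mul_eq_mul_div, mul_div_assoc]
        exact sub_le_sub_left (mul_le_of_le_one_right hs0.le (div_self_le_one _)) 1
    _ ≤ 1 - s / k' * k' / (1 + s / k') :=
        sub_le_sub_left (div_le_self (by positivity) (le_add_of_nonneg_right hw0)) 1

/-- For a, b > 1 and an integer k' ≥ 1, there exists w ≥ (b−1)/(k'·(a+b)) with
1 − w·k'/(1+w) ≥ median(Beta(a,b)), the median being any m ∈ [0,1] with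
P[X ≤ m] = 1/2 for the Beta(a,b) distribution. -/
theorem stmt_5 (a b : ℝ) (ha : 1 < a) (hb : 1 < b) (k' : ℕ) (hk' : 1 ≤ k')
    (m : ℝ) (hm0 : 0 ≤ m) (hm1 : m ≤ 1)
    (hmed : ∫ x in (0:ℝ)..m, x ^ (a - 1) * (1 - x) ^ (b - 1)
      = (1 / 2) * ∫ x in (0:ℝ)..1, x ^ (a - 1) * (1 - x) ^ (b - 1)) :
    ∃ w : ℝ, (b - 1) / ((k' : ℝ) * (a + b)) ≤ w ∧
      m ≤ 1 - w * (k' : ℝ) / (1 + w) :=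
  stmt_5_general a b ha hb k' m hm1 hmed
end
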